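/- arXiv:2601.22673 — 5 statements merged into one kernel-verified Lean document; each statement's English description precedes it below -/
import Mathlib

section
/- Let Z be a CAT(1) space with mutually opposite suspenders p₀ and q₀. Then for all z₁, z₂ ∈ Z with d(z₁,z₂) ≥ π, one has d(z₁,p₀) + d(p₀,z₂) = π and d(z₁,q₀) + d(q₀,z₂) = π. In particular diam Z = π. -/
open Real Metric

/-- A metric space is `CAT(1)` if every pair of points at distance `< π` has a midpoint
satisfying the spherical comparison (CN-type) inequality against triangles of perimeter
`< 2π` in the unit sphere. -/
def IsCATOne (Z : Type*) [MetricSpace Z] : Prop :=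
  ∀ x y : Z, dist x y < π →
    ∃ m : Z, dist x m = dist x y / 2 ∧ dist m y = dist x y / 2 ∧
      ∀ p : Z, dist p x + dist x y + dist y p < 2 * π →
        (Real.cos (dist p x) + Real.cos (dist p y)) / 2 ≤
          Real.cos (dist p m) * Real.cos (dist x y / 2)

/-!
The two paths `z₁ → p₀ → z₂` and `z₁ → q₀ → z₂` have total length
`(d(z₁,p₀) + d(z₁,q₀)) + (d(p₀,z₂) + d(z₂,q₀)) = 2π`, and each is at least `d(z₁,z₂)`. Hence `d(z₁,z₂) ≤ π` always, and when `d(z₁,z₂) ≥ π` both paths have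
length exactly `π`. The diameter `π` is attained by `p₀, q₀`.
-/

section Suspenders

variable {X : Type*} [PseudoMetricSpace X] {p q : X} {r : ℝ}

theorem dist_via_add_dist_via_eq (h : ∀ z, dist p z + dist z q = r) (x y : X) :
    (dist x p + dist p y) + (dist x q + dist q y) = 2 * r := by
  have hx := h x
  have hy := h y
  rw [dist_comm p x] at hx
  rw [dist_comm y q] at hy
  linarith

theorem dist_le_of_forall_dist_add_dist_eq (h : ∀ z, dist p z + dist z q = r) (x y : X) :
    dist x y ≤ r := by
  have := dist_via_add_dist_via_eq h x y
  linarith [dist_triangle x p y, dist_triangle x q y]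

theorem dist_via_eq_of_le_dist (h : ∀ z, dist p z + dist z q = r) {x y : X}
    (hxy : r ≤ dist x y) : dist x p + dist p y = r ∧ dist x q + dist q y = r := by
  have := dist_via_add_dist_via_eq h x y
  constructor <;> linarith [dist_triangle x p y, dist_triangle x q y]

theorem diam_univ_eq_of_forall_dist_add_dist_eq (h : ∀ z, dist p z + dist z q = r) :
    diam (Set.univ : Set X) = r := by
  have hpq : dist p q = r := by simpa using h p
  have hbdd : Bornology.IsBounded (Set.univ : Set X) :=
    isBounded_iff.2 ⟨r, fun x _ y _ => dist_le_of_forall_dist_add_dist_eq h x y⟩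
  refine le_antisymm ?_ ?_
  · exact diam_le_of_forall_dist_le (hpq ▸ dist_nonneg)
      fun x _ y _ => dist_le_of_forall_dist_add_dist_eq h x y
  · exact hpq ▸ dist_le_diam_of_mem hbdd (Set.mem_univ p) (Set.mem_univ q)

end Suspenders

theorem stmt_1_general {Z : Type*} [MetricSpace Z] (p₀ q₀ : Z)
    (h : ∀ z : Z, dist p₀ z + dist z q₀ = π) :
    (∀ z₁ z₂ : Z, π ≤ dist z₁ z₂ →
      dist z₁ p₀ + dist p₀ z₂ = π ∧ dist z₁ q₀ + dist q₀ z₂ = π) ∧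
    Metric.diam (Set.univ : Set Z) = π :=
  ⟨fun _ _ => dist_via_eq_of_le_dist h, diam_univ_eq_of_forall_dist_add_dist_eq h⟩

/-- If `p₀, q₀` are mutually opposite suspenders in a CAT(1) space `Z`, then for all
`z₁, z₂` with `d(z₁,z₂) ≥ π` one has `d(z₁,p₀) + d(p₀,z₂) = π` and
`d(z₁,q₀) + d(q₀,z₂) = π`; in particular `diam Z = π`. -/
theorem stmt_1 {Z : Type*} [MetricSpace Z] (hZ : IsCATOne Z) (p₀ q₀ : Z)
    (h : ∀ z : Z, dist p₀ z + dist z q₀ = π) :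
    (∀ z₁ z₂ : Z, π ≤ dist z₁ z₂ →
      dist z₁ p₀ + dist p₀ z₂ = π ∧ dist z₁ q₀ + dist q₀ z₂ = π) ∧
    Metric.diam (Set.univ : Set Z) = π :=
  stmt_1_general p₀ q₀ h
end

section
/- Let Z be a penetrable CAT(1) space. If p₀ and q₀ are mutually opposite (1,δ)-suspenders, i.e., sup_{z∈Z} (d(p₀,z) + d(z,q₀)) < π + δ, then inf_{z∈Z} (d(p₀,z) + d(z,q₀)) > π − δ. -/
open Real Metric

/-- A metric space is penetrable if it has a dense subset `Z₀` such that every point of `Z₀`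
has a point of `Z₀` at distance at least `π`. -/
def Penetrable (Z : Type*) [MetricSpace Z] : Prop :=
  ∃ Z₀ : Set Z, Dense Z₀ ∧ ∀ p ∈ Z₀, ∃ q ∈ Z₀, π ≤ dist p q

/-!
A point `p` with a point `q` at distance `≥ π` forces, by two triangle inequalities through `p₀`
and `q₀`, `2π ≤ (d(p₀,p) + d(p,q₀)) + (d(p₀,q) + d(q,q₀))`; the second sum is at most the
supremum `c < π + δ`, so the first is at least `2π - c > π - δ`. Penetrability supplies such
`p` densely, and `z ↦ d(p₀,z) + d(z,q₀)` is continuous, so the bound holds everywhere.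
-/

theorem two_mul_le_add_of_le_dist {X : Type*} [PseudoMetricSpace X] {a : ℝ} {p q : X}
    (h : a ≤ dist p q) (x y : X) :
    2 * a ≤ (dist x p + dist p y) + (dist x q + dist q y) := by
  have hx := dist_triangle p x q
  have hy := dist_triangle p y q
  rw [dist_comm p x] at hx
  rw [dist_comm y q] at hy
  linarith

theorem Penetrable.two_mul_pi_sub_le_add_dist {Z : Type*} [MetricSpace Z] (hpen : Penetrable Z)
    {x y : Z} {c : ℝ} (hc : ∀ z, dist x z + dist z y ≤ c) (z : Z) :
    2 * π - c ≤ dist x z + dist z y := by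
  obtain ⟨Z₀, hdense, hopp⟩ := hpen
  refine hdense.induction (P := fun z ↦ 2 * π - c ≤ dist x z + dist z y) (fun p hp ↦ ?_)
    (isClosed_le continuous_const (by fun_prop)) z
  obtain ⟨q, -, hpq⟩ := hopp p hp
  linarith [two_mul_le_add_of_le_dist hpq x y, hc q]

theorem stmt_2_general {Z : Type*} [MetricSpace Z] (hpen : Penetrable Z)
    (δ : ℝ) (p₀ q₀ : Z)
    (hsup : ∃ c, c < π + δ ∧ ∀ z : Z, dist p₀ z + dist z q₀ ≤ c) :
    ∃ c, π - δ < c ∧ ∀ z : Z, c ≤ dist p₀ z + dist z q₀ := by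
  obtain ⟨c, hcδ, hc⟩ := hsup
  exact ⟨2 * π - c, by linarith, hpen.two_mul_pi_sub_le_add_dist hc⟩

/-- In a penetrable CAT(1) space, if `p₀` and `q₀` are mutually opposite
`(1,δ)`-suspenders, i.e. `sup_z (d(p₀,z) + d(z,q₀)) < π + δ`, then
`inf_z (d(p₀,z) + d(z,q₀)) > π - δ`. -/
theorem stmt_2 {Z : Type*} [MetricSpace Z] (hZ : IsCATOne Z) (hpen : Penetrable Z)
    (δ : ℝ) (hδ0 : 0 < δ) (hδ1 : δ < 1) (p₀ q₀ : Z)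
    (hsup : ∃ c, c < π + δ ∧ ∀ z : Z, dist p₀ z + dist z q₀ ≤ c) :
    ∃ c, π - δ < c ∧ ∀ z : Z, c ≤ dist p₀ z + dist z q₀ :=
  stmt_2_general hpen δ p₀ q₀ hsup
end

section
/- Let Z be a CAT(1) space in which the spherical core C_Z (the set of all suspenders in Z) is nonempty. Then C_Z is closed in Z. Moreover, if (p_k) is a sequence in C_Z converging to p, and q_k denotes the point opposite to p_k, then (q_k) is a Cauchy sequence whose limit q satisfies d(p,z) + d(z,q) = π for all z ∈ Z. -/
open Real Metric

/-- `p` is a suspender: there is `q` with `d(p,z) + d(z,q) = π` for every `z`. -/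
def Suspender {Z : Type*} [MetricSpace Z] (p : Z) : Prop :=
  ∃ q : Z, ∀ z : Z, dist p z + dist z q = π

/-!
If `d(p,z) + d(z,q) = c` and `d(p',z) + d(z,q') = c` for all `z`, evaluating the first identity
at `q'` and the second at `p` gives `d(q,q') = d(p,p')`. Hence opposites of a Cauchy sequence form
a Cauchy sequence, and the identity `d(p,z) + d(z,q) = π` passes to the limits.
-/

open Filter Topology

section Opposite

variable {Z : Type*} [MetricSpace Z] {c : ℝ}

lemma dist_eq_dist_of_forall_dist_add_dist_eq {p q p' q' : Z}
    (h : ∀ z, dist p z + dist z q = c) (h' : ∀ z, dist p' z + dist z q' = c) :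
    dist q q' = dist p p' := by
  have hq' := h q'
  have hp := h' p
  rw [dist_comm p' p] at hp
  rw [dist_comm q q']
  linarith

lemma CauchySeq.of_forall_dist_add_dist_eq {p q : ℕ → Z}
    (hpq : ∀ k z, dist (p k) z + dist z (q k) = c) (hp : CauchySeq p) : CauchySeq q := by
  rw [Metric.cauchySeq_iff] at hp ⊢
  intro ε hε
  obtain ⟨N, hN⟩ := hp ε hε
  refine ⟨N, fun m hm n hn => ?_⟩
  rw [dist_eq_dist_of_forall_dist_add_dist_eq (hpq m) (hpq n)]
  exact hN m hm n hn

lemma dist_add_dist_eq_of_tendsto {p q : ℕ → Z} {plim qlim : Z}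
    (hpq : ∀ k z, dist (p k) z + dist z (q k) = c)
    (hp : Tendsto p atTop (𝓝 plim)) (hq : Tendsto q atTop (𝓝 qlim)) (z : Z) :
    dist plim z + dist z qlim = c := by
  have hlim : Tendsto (fun k => dist (p k) z + dist z (q k)) atTop
      (𝓝 (dist plim z + dist z qlim)) :=
    (hp.dist tendsto_const_nhds).add (tendsto_const_nhds.dist hq)
  simp only [hpq] at hlim
  exact tendsto_nhds_unique hlim tendsto_const_nhds

lemma exists_tendsto_and_dist_add_dist_eq [CompleteSpace Z] {p q : ℕ → Z} {plim : Z}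
    (hpq : ∀ k z, dist (p k) z + dist z (q k) = c) (hp : Tendsto p atTop (𝓝 plim)) :
    CauchySeq q ∧ ∃ qlim, Tendsto q atTop (𝓝 qlim) ∧ ∀ z, dist plim z + dist z qlim = c := by
  have hq := hp.cauchySeq.of_forall_dist_add_dist_eq hpq
  obtain ⟨qlim, hqlim⟩ := cauchySeq_tendsto_of_complete hq
  exact ⟨hq, qlim, hqlim, dist_add_dist_eq_of_tendsto hpq hp hqlim⟩

lemma isClosed_setOf_suspender [CompleteSpace Z] : IsClosed {p : Z | Suspender p} := by
  refine isSeqClosed_iff_isClosed.mp fun p plim hp hlim => ?_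
  choose q hq using hp
  obtain ⟨-, qlim, -, hqlim⟩ := exists_tendsto_and_dist_add_dist_eq hq hlim
  exact ⟨qlim, hqlim⟩

end Opposite

theorem stmt_12_general {Z : Type*} [MetricSpace Z] [CompleteSpace Z] :
    IsClosed {p : Z | Suspender p} ∧
    ∀ (p q : ℕ → Z) (plim : Z),
      (∀ k, ∀ z : Z, dist (p k) z + dist z (q k) = π) →
      Filter.Tendsto p Filter.atTop (nhds plim) →
      CauchySeq q ∧ ∃ qlim : Z, Filter.Tendsto q Filter.atTop (nhds qlim) ∧
        ∀ z : Z, dist plim z + dist z qlim = π :=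
  ⟨isClosed_setOf_suspender, fun _ _ _ hpq hp => exists_tendsto_and_dist_add_dist_eq hpq hp⟩

/-- In a (complete) CAT(1) space whose spherical core (the set of suspenders) is nonempty,
the spherical core is closed; moreover if suspenders `p_k` (with opposites `q_k`) converge
to `p`, then `(q_k)` is Cauchy and its limit `q` satisfies `d(p,z) + d(z,q) = π` for all
`z`. -/
theorem stmt_12 {Z : Type*} [MetricSpace Z] [CompleteSpace Z] (hZ : IsCATOne Z)
    (hne : ∃ p : Z, Suspender p) :
    IsClosed {p : Z | Suspender p} ∧
    ∀ (p q : ℕ → Z) (plim : Z),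
      (∀ k, ∀ z : Z, dist (p k) z + dist z (q k) = π) →
      Filter.Tendsto p Filter.atTop (nhds plim) →
      CauchySeq q ∧ ∃ qlim : Z, Filter.Tendsto q Filter.atTop (nhds qlim) ∧
        ∀ z : Z, dist plim z + dist z qlim = π :=
  stmt_12_general
end

section
/- Let Z be a CAT(1) space with mutually opposite suspenders p₀,q₀ and also mutually opposite suspenders p₁,q₁, with 0 < d(p₀,p₁) < π. Then the set C₁ = p₀p₁ ∪ p₁q₀ ∪ q₀q₁ ∪ q₁p₀ (the union of the four geodesics) is isometric to the round circle S¹ of circumference 2π; in particular, for distinct i,j ∈ {0,1}, the concatenations p_ip_j ∪ p_jq_i and p_iq_j ∪ q_jq_i are geodesics of length π from p_i to q_i. -/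
open Real Metric

/-- `γ` is a (unit-speed) geodesic on the interval `[a,b]`. -/
def IsGeodesic {Z : Type*} [MetricSpace Z] (γ : ℝ → Z) (a b : ℝ) : Prop :=
  ∀ s ∈ Set.Icc a b, ∀ t ∈ Set.Icc a b, dist (γ s) (γ t) = |s - t|

/-!
Run around the loop `p₀ → p₁ → q₀ → q₁ → p₀` at unit speed. Because `d(p₀,z) + d(z,q₀) = π` for
every `z`, each half `p₀p₁q₀` and `q₀q₁p₀` is a geodesic of length `π`. Between the two halves the
triangle inequality through `p₀` or `q₀` gives the upper bound `π - |t - s|`, and going through `p₁`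
or `q₁` gives the matching lower bound for every pair of points except those lying on opposite
sides, `p₀p₁` and `q₀q₁` (or `p₁q₀` and `q₁p₀`).

Take `x ∈ p₀p₁` and `y ∈ q₀q₁`, and let `m` be the CAT(1) midpoint of `x` and `q₁`. Comparing with
`p₀` puts `m` exactly where it would be on the round circle. Comparing with `y` then turns a lower
bound on `d(y,m)` into the lower bound we want on `d(x,y)`. If `m` lands on `q₁p₀`, the bound on
`d(y,m)` comes from the triangle inequality through `q₀`. Otherwise `m` lies on `p₀p₁`, at least
`(π - d(p₀,p₁)) / 2` closer to `p₀` than `x` was, so we recurse.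
-/

open Set

section Paths

variable {Z : Type*} {γ δ : ℝ → Z} {A B : ℝ}

noncomputable def concatPath (γ δ : ℝ → Z) (A t : ℝ) : Z := if t ≤ A then γ t else δ (t - A)

lemma concatPath_of_le {t : ℝ} (ht : t ≤ A) : concatPath γ δ A t = γ t := if_pos ht

lemma concatPath_of_ge (hjoin : γ A = δ 0) {t : ℝ} (ht : A ≤ t) :
    concatPath γ δ A t = δ (t - A) := by
  rcases ht.eq_or_lt with rfl | ht
  · rw [concatPath_of_le le_rfl, sub_self, hjoin]
  · exact if_neg ht.not_ge

lemma concatPath_image_Icc (hjoin : γ A = δ 0) (hA : 0 ≤ A) (hB : 0 ≤ B) :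
    concatPath γ δ A '' Icc 0 (A + B) = γ '' Icc 0 A ∪ δ '' Icc 0 B := by
  ext z
  constructor
  · rintro ⟨t, ⟨ht₀, ht₁⟩, rfl⟩
    rcases le_total t A with htA | htA
    · exact Or.inl ⟨t, ⟨ht₀, htA⟩, (concatPath_of_le htA).symm⟩
    · exact Or.inr ⟨t - A, ⟨by linarith, by linarith⟩, (concatPath_of_ge hjoin htA).symm⟩
  · rintro (⟨t, ⟨ht₀, ht₁⟩, rfl⟩ | ⟨t, ⟨ht₀, ht₁⟩, rfl⟩)
    · exact ⟨t, ⟨ht₀, by linarith⟩, concatPath_of_le ht₁⟩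
    · refine ⟨t + A, ⟨by linarith, by linarith⟩, ?_⟩
      rw [concatPath_of_ge hjoin (by linarith), add_sub_cancel_right]

variable [MetricSpace Z]

lemma IsGeodesic.concat (hγ : IsGeodesic γ 0 A) (hδ : IsGeodesic δ 0 B)
    (hjoin : γ A = δ 0) (hlen : dist (γ 0) (δ B) = A + B) :
    IsGeodesic (concatPath γ δ A) 0 (A + B) := by
  have across : ∀ s t, 0 ≤ s → s ≤ A → A ≤ t → t ≤ A + B →
      dist (concatPath γ δ A s) (concatPath γ δ A t) = |s - t| := by
    intro s t hs hsA htA htB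
    have hγs := hγ s ⟨hs, hsA⟩
    have hδt := hδ (t - A) ⟨by linarith, by linarith⟩
    have hγA := hγs A ⟨hs.trans hsA, le_rfl⟩
    have hγ0 := hγs 0 ⟨le_rfl, hs.trans hsA⟩
    have hδ0 := hδt 0 ⟨le_rfl, by linarith⟩
    have hδB := hδt B ⟨by linarith, le_rfl⟩
    rw [hjoin, abs_of_nonpos (by linarith)] at hγA
    rw [abs_of_nonneg (by linarith)] at hγ0 hδ0
    rw [abs_of_nonpos (by linarith)] at hδB
    rw [concatPath_of_le hsA, concatPath_of_ge hjoin htA, abs_of_nonpos (by linarith)]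
    apply le_antisymm
    · linarith [dist_triangle (γ s) (δ 0) (δ (t - A)), dist_comm (δ 0) (δ (t - A))]
    · linarith [dist_triangle4 (γ 0) (γ s) (δ (t - A)) (δ B), dist_comm (γ 0) (γ s)]
  intro s hs t ht
  rcases le_total s A with hsA | hsA <;> rcases le_total t A with htA | htA
  · rw [concatPath_of_le hsA, concatPath_of_le htA]
    exact hγ s ⟨hs.1, hsA⟩ t ⟨ht.1, htA⟩
  · exact across s t hs.1 hsA htA ht.2
  · rw [dist_comm, abs_sub_comm]
    exact across t s ht.1 htA hsA hs.2
  · rw [concatPath_of_ge hjoin hsA, concatPath_of_ge hjoin htA,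
      hδ _ ⟨by linarith, by linarith [hs.2]⟩ _ ⟨by linarith, by linarith [ht.2]⟩,
      sub_sub_sub_cancel_right]

def IsGeodesicSegment (γ : ℝ → Z) (L : ℝ) (x y : Z) : Prop :=
  IsGeodesic γ 0 L ∧ γ 0 = x ∧ γ L = y

lemma dist_concatPath_loop {H₁ H₂ : ℝ → Z} (hH₁ : IsGeodesic H₁ 0 π) (hH₂ : IsGeodesic H₂ 0 π)
    (hjoin : H₁ π = H₂ 0)
    (hcross : ∀ s ∈ Icc 0 π, ∀ t ∈ Icc 0 π, dist (H₁ s) (H₂ t) = π - |t - s|) :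
    ∀ s ∈ Icc 0 (2 * π), ∀ t ∈ Icc 0 (2 * π),
      dist (concatPath H₁ H₂ π s) (concatPath H₁ H₂ π t) = π - |(π - |s - t|)| := by
  have across : ∀ s t, 0 ≤ s → s ≤ π → π ≤ t → t ≤ 2 * π →
      dist (concatPath H₁ H₂ π s) (concatPath H₁ H₂ π t) = π - |(π - |s - t|)| := by
    intro s t hs hsπ htπ ht
    rw [concatPath_of_le hsπ, concatPath_of_ge hjoin htπ,
      hcross s ⟨hs, hsπ⟩ (t - π) ⟨by linarith, by linarith⟩,
      abs_of_nonpos (by linarith : s - t ≤ 0),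
      abs_sub_comm (t - π) s]
    ring_nf
  have within : ∀ s t, |s - t| ≤ π → π - |(π - |s - t|)| = |s - t| := by
    intro s t h
    rw [abs_of_nonneg (by linarith)]
    ring
  intro s hs t ht
  rcases le_total s π with hsπ | hsπ <;> rcases le_total t π with htπ | htπ
  · rw [concatPath_of_le hsπ, concatPath_of_le htπ, hH₁ s ⟨hs.1, hsπ⟩ t ⟨ht.1, htπ⟩,
      within s t (abs_sub_le_iff.mpr ⟨by linarith [ht.1], by linarith [hs.1]⟩)]
  · exact across s t hs.1 hsπ htπ ht.2
  · rw [dist_comm, abs_sub_comm s t]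
    exact across t s ht.1 htπ hsπ hs.2
  · rw [concatPath_of_ge hjoin hsπ, concatPath_of_ge hjoin htπ,
      hH₂ _ ⟨by linarith, by linarith [hs.2]⟩ _ ⟨by linarith, by linarith [ht.2]⟩,
      sub_sub_sub_cancel_right,
      within s t (abs_sub_le_iff.mpr ⟨by linarith [hs.2], by linarith [ht.2]⟩)]

end Paths

section CircleParam

variable {R : Type*} [Field R] [LinearOrder R] [IsStrictOrderedRing R] [FloorRing R]

lemma Int.fract_sub_of_fract_le {x y : R} (h : Int.fract y ≤ Int.fract x) :
    Int.fract (x - y) = Int.fract x - Int.fract y := by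
  rw [Int.fract_eq_iff]
  refine ⟨sub_nonneg.mpr h, by linarith [Int.fract_lt_one x, Int.fract_nonneg y], ⌊x⌋ - ⌊y⌋, ?_⟩
  push_cast
  unfold Int.fract
  ring

lemma Int.fract_sub_of_fract_lt {x y : R} (h : Int.fract x < Int.fract y) :
    Int.fract (x - y) = Int.fract x - Int.fract y + 1 := by
  rw [Int.fract_eq_iff]
  refine ⟨by linarith [Int.fract_nonneg x, Int.fract_lt_one y], by linarith, ⌊x⌋ - ⌊y⌋ - 1, ?_⟩
  push_cast
  unfold Int.fract
  ring

lemma pi_sub_abs_two_pi_fract_sub (s t : ℝ) :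
    π - |2 * π * Int.fract ((s - t) / (2 * π)) - π| =
      π - |(π - |2 * π * Int.fract (s / (2 * π)) - 2 * π * Int.fract (t / (2 * π))|)| := by
  rw [sub_div]
  rcases le_or_gt (Int.fract (t / (2 * π))) (Int.fract (s / (2 * π))) with h | h
  · rw [Int.fract_sub_of_fract_le h, abs_of_nonneg (by nlinarith [pi_pos] :
      0 ≤ 2 * π * Int.fract (s / (2 * π)) - 2 * π * Int.fract (t / (2 * π))), abs_sub_comm π]
    ring_nf
  · rw [Int.fract_sub_of_fract_lt h, abs_of_neg (by nlinarith [pi_pos] :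
      2 * π * Int.fract (s / (2 * π)) - 2 * π * Int.fract (t / (2 * π)) < 0)]
    ring_nf

lemma range_two_pi_mul_fract :
    range (fun θ => 2 * π * Int.fract (θ / (2 * π))) = Ico 0 (2 * π) := by
  ext x
  constructor
  · rintro ⟨θ, rfl⟩
    simpa only [mul_comm (2 * π)] using Int.fract_div_mul_self_mem_Ico (2 * π) θ two_pi_pos
  · intro hx
    refine ⟨x, show 2 * π * Int.fract (x / (2 * π)) = x from ?_⟩
    rw [Int.fract_eq_self.mpr ⟨div_nonneg hx.1 two_pi_pos.le, (div_lt_one two_pi_pos).mpr hx.2⟩]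
    field_simp

variable {Z : Type*} [MetricSpace Z]

lemma exists_circle_param_of_loop {g : ℝ → Z}
    (hg : ∀ s ∈ Icc 0 (2 * π), ∀ t ∈ Icc 0 (2 * π), dist (g s) (g t) = π - |(π - |s - t|)|) :
    ∃ f : ℝ → Z, f 0 = g 0 ∧
      (∀ s t : ℝ, dist (f s) (f t) = π - |2 * π * Int.fract ((s - t) / (2 * π)) - π|) ∧
      range f = g '' Icc 0 (2 * π) := by
  have hmem : ∀ θ, 2 * π * Int.fract (θ / (2 * π)) ∈ Icc 0 (2 * π) := fun θ =>
    Ico_subset_Icc_self (range_two_pi_mul_fract ▸ mem_range_self θ)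
  have hperiod : g (2 * π) = g 0 := by
    rw [← dist_eq_zero, hg _ ⟨two_pi_pos.le, le_rfl⟩ 0 ⟨le_rfl, two_pi_pos.le⟩, sub_zero,
      abs_of_pos two_pi_pos, show π - 2 * π = -π by ring, abs_neg, abs_of_pos pi_pos, sub_self]
  refine ⟨fun θ => g (2 * π * Int.fract (θ / (2 * π))), by simp, fun s t => ?_, ?_⟩
  · rw [pi_sub_abs_two_pi_fract_sub]
    exact hg _ (hmem s) _ (hmem t)
  · rw [range_comp' g, range_two_pi_mul_fract, ← Ico_insert_right two_pi_pos.le, image_insert_eq,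
      insert_eq_of_mem (hperiod ▸ mem_image_of_mem g ⟨le_rfl, two_pi_pos⟩)]

end CircleParam

section CATOne

variable {Z : Type*} [MetricSpace Z]

lemma cos_pi_sub_abs_pi_sub (t : ℝ) : cos (π - |π - t|) = cos t := by
  rw [cos_pi_sub, cos_abs, cos_pi_sub, neg_neg]

structure IsCATMidpoint (x y m : Z) : Prop where
  dist_left : dist x m = dist x y / 2
  dist_right : dist m y = dist x y / 2
  cos_le : ∀ p : Z, dist p x + dist x y + dist y p < 2 * π →
    (cos (dist p x) + cos (dist p y)) / 2 ≤ cos (dist p m) * cos (dist x y / 2)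

lemma IsCATOne.exists_isCATMidpoint (hZ : IsCATOne Z) {x y : Z} (h : dist x y < π) :
    ∃ m, IsCATMidpoint x y m :=
  let ⟨m, h₁, h₂, h₃⟩ := hZ x y h
  ⟨m, h₁, h₂, h₃⟩

namespace IsCATMidpoint

variable {x y m : Z}

lemma dist_eq_of_dist_add_dist_eq (hm : IsCATMidpoint x y m) (hxy : dist x y < π) {p : Z}
    (hp : dist p x + dist p y = dist x y) : dist p m = |dist p x - dist p y| / 2 := by
  have hcos := hm.cos_le p (by rw [dist_comm y p]; linarith)
  have hxm := dist_triangle p m x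
  have hym := dist_triangle p m y
  have hmx := dist_triangle p x m
  have hmy := dist_triangle p y m
  rw [dist_comm m x, hm.dist_left] at hxm
  rw [hm.dist_right] at hym
  rw [hm.dist_left] at hmx
  rw [dist_comm y m, hm.dist_right] at hmy
  rw [cos_add_cos, hp] at hcos
  set α := dist p x
  set β := dist p y
  set ℓ := dist x y
  have hα : 0 ≤ α := dist_nonneg
  have hβ : 0 ≤ β := dist_nonneg
  have hdiff : |α - β| ≤ ℓ := abs_sub_le_iff.mpr ⟨by linarith, by linarith⟩
  apply le_antisymm
  · have hhalf : 0 < cos (ℓ / 2) := cos_pos_of_mem_Ioo ⟨by linarith [pi_pos], by linarith⟩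
    have hle : cos (|α - β| / 2) ≤ cos (dist p m) := by
      rw [show |α - β| / 2 = |(α - β) / 2| by rw [abs_div, abs_two], cos_abs]
      exact le_of_mul_le_mul_left (by linarith) hhalf
    have hpm : dist p m ∈ Icc 0 π := ⟨dist_nonneg, by linarith⟩
    have hαβ : |α - β| / 2 ∈ Icc 0 π := ⟨by positivity, by linarith⟩
    exact (strictAntiOn_cos.le_iff_ge hαβ hpm).mp hle
  · rw [div_le_iff₀ two_pos]
    exact abs_sub_le_iff.mpr ⟨by linarith, by linarith⟩

/-- In the comparison sphere, `x`, `m`, `y` and `p` would lie on one great circle in this order. -/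
lemma le_dist_left (hm : IsCATMidpoint x y m) (hxy : dist x y < π) {p : Z}
    (hpm : π - |π - (dist p y + dist x y / 2)| ≤ dist p m) :
    π - |π - (dist p y + dist x y)| ≤ dist p x := by
  have hcomp := hm.cos_le p
  have hmx := dist_triangle p x m
  have hmy := dist_triangle p y m
  rw [hm.dist_left] at hmx
  rw [dist_comm y m, hm.dist_right] at hmy
  rw [dist_comm y p] at hcomp
  set D := dist p x
  set β := dist p y
  set ℓ := dist x y
  have hD₀ : 0 ≤ D := dist_nonneg
  have hβ : 0 ≤ β := dist_nonneg
  have hℓ : 0 ≤ ℓ := dist_nonneg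
  by_contra! hD
  have hτ := neg_abs_le (π - (β + ℓ))
  have hτ' := abs_nonneg (π - (β + ℓ))
  have hτπ : |π - (β + ℓ)| ≤ π := abs_sub_le_iff.mpr ⟨by linarith, by linarith⟩
  have hT : |π - (β + ℓ / 2)| ≤ π := abs_sub_le_iff.mpr ⟨by linarith, by linarith⟩
  have hcos_pm : cos (dist p m) ≤ cos (β + ℓ / 2) := by
    rw [← cos_pi_sub_abs_pi_sub (β + ℓ / 2)]
    exact (strictAntiOn_cos.le_iff_ge ⟨dist_nonneg, by linarith⟩
      ⟨by linarith, by linarith [abs_nonneg (π - (β + ℓ / 2))]⟩).mpr hpm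
  have hhalf : 0 ≤ cos (ℓ / 2) := cos_nonneg_of_mem_Icc ⟨by linarith [pi_pos], by linarith⟩
  have hsum : cos (β + ℓ) + cos β = 2 * cos (β + ℓ / 2) * cos (ℓ / 2) := by
    rw [cos_add_cos]; ring_nf
  have hcos_px : cos D ≤ cos (π - |π - (β + ℓ)|) := by
    rw [cos_pi_sub_abs_pi_sub]
    nlinarith [hcomp (by linarith), mul_le_mul_of_nonneg_right hcos_pm hhalf]
  exact hcos_px.not_gt (strictAntiOn_cos ⟨hD₀, by linarith⟩ ⟨by linarith, by linarith⟩ hD)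

end IsCATMidpoint

end CATOne

section Suspenders

variable {Z : Type*} [MetricSpace Z]

def OppositeSuspenders (p q : Z) : Prop := ∀ z : Z, dist p z + dist z q = π

lemma OppositeSuspenders.symm {p q : Z} (h : OppositeSuspenders p q) : OppositeSuspenders q p :=
  fun z => by linarith [h z, dist_comm p z, dist_comm z q]

lemma OppositeSuspenders.dist_right {p q : Z} (h : OppositeSuspenders p q) (z : Z) :
    dist q z = π - dist p z := by
  linarith [h z, dist_comm z q]

lemma OppositeSuspenders.isGeodesicSegment_concatPath {p q z : Z} {γ δ : ℝ → Z}
    (h : OppositeSuspenders p q) (hγ : IsGeodesicSegment γ (dist p z) p z)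
    (hδ : IsGeodesicSegment δ (dist z q) z q) :
    IsGeodesicSegment (concatPath γ δ (dist p z)) π p q := by
  have hjoin : γ (dist p z) = δ 0 := hγ.2.2.trans hδ.2.1.symm
  rw [← h z]
  refine ⟨hγ.1.concat hδ.1 hjoin ?_, (concatPath_of_le dist_nonneg).trans hγ.2.1, ?_⟩
  · rw [hγ.2.1, hδ.2.2, h z]
    linarith [h q, dist_self q]
  · rw [concatPath_of_ge hjoin (le_add_of_nonneg_right dist_nonneg), add_sub_cancel_left, hδ.2.2]

variable {P₀ Q₀ P₁ Q₁ : Z}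

/-- `ih` is only invoked when the comparison midpoint of `x` and `Q₁` falls on `P₀P₁`. -/
lemma le_dist_of_halving (hZ : IsCATOne Z) (h₀ : OppositeSuspenders P₀ Q₀)
    (h₁ : OppositeSuspenders P₁ Q₁) {x y : Z}
    (hx : dist P₀ x + dist x P₁ = dist P₀ P₁) (hy : dist Q₀ y + dist y Q₁ = dist P₀ P₁)
    (ih : π < dist P₀ P₁ + dist P₀ x → ∀ m : Z, dist P₀ m + dist m P₁ = dist P₀ P₁ →
      dist P₀ m = (dist P₀ P₁ + dist P₀ x - π) / 2 → π - |dist Q₀ y - dist P₀ m| ≤ dist m y) :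
    π - |dist Q₀ y - dist P₀ x| ≤ dist x y := by
  have hxQ : dist x Q₁ = π - dist x P₁ := by linarith [h₁ x, dist_comm P₁ x]
  have hP₀Q₁ : dist P₀ Q₁ = π - dist P₀ P₁ := by linarith [h₁ P₀, dist_comm P₁ P₀]
  have hyQ₀ := dist_nonneg (x := Q₀) (y := y)
  have hyQ₁ := dist_nonneg (x := y) (y := Q₁)
  have hnx := neg_abs_le (dist Q₀ y - dist P₀ x)
  rcases (dist_nonneg : 0 ≤ dist x P₁).eq_or_lt with hxP | hxP
  · linarith [h₁ y, dist_triangle P₁ x y, dist_comm y Q₁, dist_comm x P₁]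
  obtain ⟨m, hm⟩ := hZ.exists_isCATMidpoint (show dist x Q₁ < π by linarith)
  have hP₀m : dist P₀ m = |dist P₀ x - dist P₀ Q₁| / 2 :=
    hm.dist_eq_of_dist_add_dist_eq (by linarith) (by linarith [dist_comm P₀ x])
  rw [hP₀Q₁] at hP₀m
  have hym : π - |π - (dist y Q₁ + dist x Q₁ / 2)| ≤ dist y m := by
    by_cases hc : dist P₀ P₁ + dist P₀ x ≤ π
    · rw [abs_of_nonpos (by linarith)] at hP₀m
      linarith [h₀ m, dist_triangle Q₀ y m, dist_comm Q₀ m,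
        le_abs_self (π - (dist y Q₁ + dist x Q₁ / 2))]
    · rw [abs_of_pos (by linarith)] at hP₀m
      have hmP₁ : dist m P₁ = π - dist x Q₁ / 2 := by
        linarith [h₁ m, dist_comm P₁ m, hm.dist_right]
      have := ih (not_le.mp hc) m (by linarith) (by linarith)
      rw [dist_comm m y] at this
      convert this using 3
      linarith
  have := hm.le_dist_left (by linarith) hym
  rw [dist_comm y x] at this
  convert this using 3
  linarith

theorem le_dist_of_mem_sides (hZ : IsCATOne Z) (h₀ : OppositeSuspenders P₀ Q₀)
    (h₁ : OppositeSuspenders P₁ Q₁) (ha : dist P₀ P₁ < π) {x y : Z}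
    (hx : dist P₀ x + dist x P₁ = dist P₀ P₁) (hy : dist Q₀ y + dist y Q₁ = dist P₀ P₁) :
    π - |dist Q₀ y - dist P₀ x| ≤ dist x y := by
  have hδ : 0 < (π - dist P₀ P₁) / 2 := by linarith
  suffices H : ∀ n : ℕ, ∀ x : Z, dist P₀ x + dist x P₁ = dist P₀ P₁ →
      dist P₀ x ≤ n * ((π - dist P₀ P₁) / 2) → π - |dist Q₀ y - dist P₀ x| ≤ dist x y by
    obtain ⟨n, hn⟩ := exists_nat_ge (dist P₀ x / ((π - dist P₀ P₁) / 2))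
    exact H n x hx ((div_le_iff₀ hδ).mp hn)
  intro n
  induction n with
  | zero =>
    intro x hx hs
    refine le_dist_of_halving hZ h₀ h₁ hx hy fun hc => absurd hc ?_
    simp only [CharP.cast_eq_zero, zero_mul] at hs
    linarith
  | succ n ih =>
    intro x hx hs
    refine le_dist_of_halving hZ h₀ h₁ hx hy fun hc m hm hP₀m => ih m hm ?_
    rw [Nat.cast_succ, add_mul, one_mul] at hs
    linarith [dist_nonneg (x := P₀) (y := x)]

theorem dist_eq_of_dist_poles (hZ : IsCATOne Z) (h₀ : OppositeSuspenders P₀ Q₀)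
    (h₁ : OppositeSuspenders P₁ Q₁) (hpos : 0 < dist P₀ P₁) (hlt : dist P₀ P₁ < π) {x y : Z}
    (hx : dist P₁ x = |dist P₀ x - dist P₀ P₁|) (hy : dist Q₁ y = |dist Q₀ y - dist P₀ P₁|) :
    dist x y = π - |dist Q₀ y - dist P₀ x| := by
  have hP₁Q₀ : dist P₁ Q₀ = π - dist P₀ P₁ := by linarith [h₀ P₁]
  have hx₀ := h₀.dist_right x
  have hy₀ := h₀.symm.dist_right y
  have hx₁ := h₁.dist_right x
  have hy₁ := h₁.symm.dist_right y
  apply le_antisymm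
  · have := abs_sub_le_iff.mpr (⟨by linarith [dist_triangle x P₀ y, dist_comm x P₀],
      by linarith [dist_triangle x Q₀ y, dist_comm x Q₀]⟩ :
        dist Q₀ y - dist P₀ x ≤ π - dist x y ∧ dist P₀ x - dist Q₀ y ≤ π - dist x y)
    linarith
  have hux := neg_abs_le (dist Q₀ y - dist P₀ x)
  have hux' := le_abs_self (dist Q₀ y - dist P₀ x)
  rcases le_total (dist P₀ x) (dist P₀ P₁) with hs | hs <;>
    rcases le_total (dist Q₀ y) (dist P₀ P₁) with hu | hu
  · rw [abs_of_nonpos (by linarith)] at hx hy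
    exact le_dist_of_mem_sides hZ h₀ h₁ hlt (by linarith [dist_comm x P₁])
      (by linarith [dist_comm y Q₁])
  · rw [abs_of_nonpos (by linarith)] at hx
    rw [abs_of_nonneg (by linarith)] at hy
    linarith [dist_triangle P₁ x y]
  · rw [abs_of_nonneg (by linarith)] at hx
    rw [abs_of_nonpos (by linarith)] at hy
    linarith [dist_triangle Q₁ y x, dist_comm y x]
  · rw [abs_of_nonneg (by linarith)] at hx hy
    have := le_dist_of_mem_sides hZ h₁ h₀.symm (by linarith) (x := x) (y := y)
      (by linarith [dist_comm x Q₀]) (by linarith [dist_comm y P₀])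
    rw [hx, hy, sub_sub_sub_cancel_right] at this
    exact this

theorem dist_eq_of_isGeodesicSegment_halves (hZ : IsCATOne Z) (h₀ : OppositeSuspenders P₀ Q₀)
    (h₁ : OppositeSuspenders P₁ Q₁) (hpos : 0 < dist P₀ P₁) (hlt : dist P₀ P₁ < π)
    {H₁ H₂ : ℝ → Z} (hH₁ : IsGeodesicSegment H₁ π P₀ Q₀) (hH₁P₁ : H₁ (dist P₀ P₁) = P₁)
    (hH₂ : IsGeodesicSegment H₂ π Q₀ P₀) (hH₂Q₁ : H₂ (dist P₀ P₁) = Q₁) :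
    ∀ s ∈ Icc 0 π, ∀ t ∈ Icc 0 π, dist (H₁ s) (H₂ t) = π - |t - s| := by
  intro s hs t ht
  have ha : dist P₀ P₁ ∈ Icc 0 π := ⟨hpos.le, hlt.le⟩
  have h0 : (0 : ℝ) ∈ Icc 0 π := ⟨le_rfl, pi_pos.le⟩
  have hx₀ : dist P₀ (H₁ s) = s := by
    rw [← hH₁.2.1, hH₁.1 0 h0 s hs, zero_sub, abs_neg, abs_of_nonneg hs.1]
  have hy₀ : dist Q₀ (H₂ t) = t := by
    rw [← hH₂.2.1, hH₂.1 0 h0 t ht, zero_sub, abs_neg, abs_of_nonneg ht.1]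
  have hx₁ : dist P₁ (H₁ s) = |dist P₀ (H₁ s) - dist P₀ P₁| := by
    rw [hx₀, abs_sub_comm, ← hH₁.1 _ ha s hs, hH₁P₁]
  have hy₁ : dist Q₁ (H₂ t) = |dist Q₀ (H₂ t) - dist P₀ P₁| := by
    rw [hy₀, abs_sub_comm, ← hH₂.1 _ ha t ht, hH₂Q₁]
  rw [dist_eq_of_dist_poles hZ h₀ h₁ hpos hlt hx₁ hy₁, hx₀, hy₀]

end Suspenders

/-- Let `p₀,q₀` and `p₁,q₁` be two pairs of mutually opposite suspenders in a CAT(1)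
space, with `0 < d(p₀,p₁) < π`.  Then the union `C₁` of the four geodesics
`p₀p₁ ∪ p₁q₀ ∪ q₀q₁ ∪ q₁p₀` is isometric to the round circle of circumference `2π`
(parametrized by a map `f : ℝ → Z` realizing the arc-length distance
`π - |2π·fract((s-t)/2π) - π|`); in particular, for distinct `i,j ∈ {0,1}` the
concatenations `pᵢpⱼ ∪ pⱼqᵢ` and `pᵢqⱼ ∪ qⱼqᵢ` are geodesics of length `π` from `pᵢ`
to `qᵢ`.  -/
theorem stmt_13 {Z : Type*} [MetricSpace Z] (hZ : IsCATOne Z) (p₀ q₀ p₁ q₁ : Z)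
    (h₀ : ∀ z : Z, dist p₀ z + dist z q₀ = π)
    (h₁ : ∀ z : Z, dist p₁ z + dist z q₁ = π)
    (hpos : 0 < dist p₀ p₁) (hlt : dist p₀ p₁ < π)
    (γ₁ γ₂ γ₃ γ₄ : ℝ → Z)
    (hγ₁ : IsGeodesic γ₁ 0 (dist p₀ p₁) ∧ γ₁ 0 = p₀ ∧ γ₁ (dist p₀ p₁) = p₁)
    (hγ₂ : IsGeodesic γ₂ 0 (dist p₁ q₀) ∧ γ₂ 0 = p₁ ∧ γ₂ (dist p₁ q₀) = q₀)
    (hγ₃ : IsGeodesic γ₃ 0 (dist q₀ q₁) ∧ γ₃ 0 = q₀ ∧ γ₃ (dist q₀ q₁) = q₁)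
    (hγ₄ : IsGeodesic γ₄ 0 (dist q₁ p₀) ∧ γ₄ 0 = q₁ ∧ γ₄ (dist q₁ p₀) = p₀) :
    (dist p₀ p₁ + dist p₁ q₀ = π ∧ dist p₀ q₁ + dist q₁ q₀ = π ∧
      dist p₁ p₀ + dist p₀ q₁ = π ∧ dist p₁ q₀ + dist q₀ q₁ = π) ∧
    ∃ f : ℝ → Z, f 0 = p₀ ∧
      (∀ s t : ℝ, dist (f s) (f t) = π - |2 * π * Int.fract ((s - t) / (2 * π)) - π|) ∧
      Set.range f =
        γ₁ '' Set.Icc 0 (dist p₀ p₁) ∪ γ₂ '' Set.Icc 0 (dist p₁ q₀) ∪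
          γ₃ '' Set.Icc 0 (dist q₀ q₁) ∪ γ₄ '' Set.Icc 0 (dist q₁ p₀) := by
  have hs₀ : OppositeSuspenders p₀ q₀ := h₀
  have hq : dist q₀ q₁ = dist p₀ p₁ := by linarith [h₀ p₁, h₁ q₀]
  have hH₁ := hs₀.isGeodesicSegment_concatPath hγ₁ hγ₂
  have hH₂ := hs₀.symm.isGeodesicSegment_concatPath hγ₃ hγ₄
  have hjoin := hH₁.2.2.trans hH₂.2.1.symm
  have hcross := dist_eq_of_isGeodesicSegment_halves hZ hs₀ h₁ hpos hlt hH₁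
    ((concatPath_of_le le_rfl).trans hγ₁.2.2) hH₂
    (hq ▸ (concatPath_of_le le_rfl).trans hγ₃.2.2)
  obtain ⟨f, hf₀, hf, hrange⟩ :=
    exists_circle_param_of_loop (dist_concatPath_loop hH₁.1 hH₂.1 hjoin hcross)
  refine ⟨⟨h₀ p₁, by linarith [h₀ q₁, dist_comm q₁ q₀], h₁ p₀, h₁ q₀⟩, f,
    hf₀.trans ((concatPath_of_le pi_pos.le).trans hH₁.2.1), hf, ?_⟩
  rw [hrange, two_mul, concatPath_image_Icc hjoin pi_pos.le pi_pos.le, union_assoc (_ ∪ _)]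
  congr 1
  · nth_rw 1 [← h₀ p₁]
    exact concatPath_image_Icc (hγ₁.2.2.trans hγ₂.2.1.symm) dist_nonneg dist_nonneg
  · nth_rw 1 [← hs₀.symm q₁]
    exact concatPath_image_Icc (hγ₃.2.2.trans hγ₄.2.1.symm) dist_nonneg dist_nonneg
end

section
/- Let {p₁,q₁} and {p₂,q₂} be two pairs of points in a CAT(1) space Z such that every point of {p₁,q₁} is at distance exactly π/2 from every point of {p₂,q₂}. Assume d(p₁,q₁) ≥ π and d(p₂,q₂) < π. Then {p₁,q₁} is perpendicular to every point of the geodesic p₂q₂: for every z on the geodesic from p₂ to q₂, d(p₁,z) = d(q₁,z) = π/2. -/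
open Real Metric

lemma key_lune {Z : Type*} [MetricSpace Z] (hZ : IsCATOne Z) (p₁ q₁ : Z)
    (hpq : π ≤ dist p₁ q₁) (x y z : Z)
    (hx1 : dist p₁ x = π / 2) (hy1 : dist p₁ y = π / 2)
    (hx2 : dist q₁ x = π / 2) (hy2 : dist q₁ y = π / 2)
    (hxy : dist x y < π)
    (hzx : dist x z = dist x y / 2) (hzy : dist z y = dist x y / 2) :
    dist p₁ z = π / 2 ∧ dist q₁ z = π / 2 := by
  obtain ⟨m, hm1, hm2, hcomp⟩ := hZ x y hxy
  set d := dist x y with hd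
  have hd0 : 0 ≤ d := dist_nonneg
  have hcpos : 0 < Real.cos (d / 2) := by
    apply Real.cos_pos_of_mem_Ioo
    constructor <;> [linarith [Real.pi_pos]; linarith]
  -- z = m
  have hzm : z = m := by
    have hper : dist z x + d + dist y z < 2 * π := by
      rw [dist_comm z x, hzx, dist_comm y z, hzy]; linarith
    have h := hcomp z hper
    rw [dist_comm z x, hzx, dist_comm z y] at h
    rw [dist_comm y z, hzy] at h
    have hone : 1 ≤ Real.cos (dist z m) := by
      have : Real.cos (d/2) ≤ Real.cos (dist z m) * Real.cos (d/2) := by linarith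
      nlinarith
    have hle : Real.cos (dist z m) ≤ 1 := Real.cos_le_one _
    have hcos1 : Real.cos (dist z m) = 1 := le_antisymm hle hone
    have hb : dist z m ≤ d := by
      calc dist z m ≤ dist z x + dist x m := dist_triangle _ _ _
        _ = d := by rw [dist_comm z x, hzx, hm1]; ring
    have := (Real.cos_eq_one_iff_of_lt_of_lt
      (by linarith [Real.pi_pos, dist_nonneg (x:=z) (y:=m)] : -(2*π) < dist z m)
      (by linarith [Real.pi_pos] : dist z m < 2*π)).mp hcos1
    exact dist_eq_zero.mp this
  subst hzm
  have bound : ∀ w : Z, dist w x = π/2 → dist w y = π/2 → dist w z ≤ π/2 := by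
    intro w hwx hwy
    have hper : dist w x + d + dist y w < 2 * π := by
      rw [hwx, dist_comm y w, hwy]; linarith
    have h := hcomp w hper
    rw [hwx, hwy, Real.cos_pi_div_two] at h
    have hnn : 0 ≤ Real.cos (dist w z) := by nlinarith
    have hb : dist w z ≤ π/2 + d/2 := by
      calc dist w z ≤ dist w x + dist x z := dist_triangle _ _ _
        _ = π/2 + d/2 := by rw [hwx, hm1]
    by_contra hc
    push_neg at hc
    have := Real.cos_neg_of_pi_div_two_lt_of_lt hc (by linarith)
    linarith
  have hp := bound p₁ hx1 hy1
  have hq := bound q₁ hx2 hy2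
  have htri : dist p₁ q₁ ≤ dist p₁ z + dist q₁ z := by
    calc dist p₁ q₁ ≤ dist p₁ z + dist z q₁ := dist_triangle _ _ _
      _ = dist p₁ z + dist q₁ z := by rw [dist_comm z q₁]
  constructor <;> linarith

/-- Lune lemma, perpendicularity part: if every point of `{p₁,q₁}` lies at distance `π/2`
from every point of `{p₂,q₂}`, `d(p₁,q₁) ≥ π` and `d(p₂,q₂) < π`, then every point on the
geodesic from `p₂` to `q₂` is at distance `π/2` from `p₁` and from `q₁`. -/
theorem stmt_15 {Z : Type*} [MetricSpace Z] (hZ : IsCATOne Z) (p₁ q₁ p₂ q₂ : Z)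
    (h₁₂ : dist p₁ p₂ = π / 2) (h₁₂' : dist p₁ q₂ = π / 2)
    (h₁'₂ : dist q₁ p₂ = π / 2) (h₁'₂' : dist q₁ q₂ = π / 2)
    (h₁ : π ≤ dist p₁ q₁) (h₂ : dist p₂ q₂ < π) :
    ∀ γ : ℝ → Z, IsGeodesic γ 0 (dist p₂ q₂) → γ 0 = p₂ → γ (dist p₂ q₂) = q₂ →
      ∀ t ∈ Set.Icc 0 (dist p₂ q₂), dist p₁ (γ t) = π / 2 ∧ dist q₁ (γ t) = π / 2 := by
  intro γ hγ hγ0 hγD t ht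
  set D := dist p₂ q₂ with hD
  have hD0 : 0 ≤ D := dist_nonneg
  set S : ℝ → Prop := fun s => dist p₁ (γ s) = π / 2 ∧ dist q₁ (γ s) = π / 2 with hS
  -- midpoint closure
  have mid : ∀ a b : ℝ, a ∈ Set.Icc 0 D → b ∈ Set.Icc 0 D → a ≤ b → S a → S b →
      S ((a + b) / 2) := by
    intro a b ha hb hab hSa hSb
    have hm : (a + b) / 2 ∈ Set.Icc 0 D := ⟨by linarith [ha.1, hb.1], by linarith [ha.2, hb.2]⟩
    have hdab : dist (γ a) (γ b) = b - a := by
      rw [hγ a ha b hb]; rw [abs_of_nonpos (by linarith)]; ring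
    have hdab' : dist (γ a) (γ b) < π := by rw [hdab]; linarith [ha.1, hb.2]
    have h1 : dist (γ a) (γ ((a+b)/2)) = dist (γ a) (γ b) / 2 := by
      rw [hγ a ha _ hm, hdab, abs_of_nonpos (by linarith)]; ring
    have h2 : dist (γ ((a+b)/2)) (γ b) = dist (γ a) (γ b) / 2 := by
      rw [hγ _ hm b hb, hdab, abs_of_nonpos (by linarith)]; ring
    exact key_lune hZ p₁ q₁ h₁ (γ a) (γ b) (γ ((a+b)/2))
      hSa.1 hSb.1 hSa.2 hSb.2 hdab' h1 h2
  have S0 : S 0 := by rw [hS]; simp only; rw [hγ0]; exact ⟨h₁₂, h₁'₂⟩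
  have SD : S D := by rw [hS]; simp only; rw [hγD]; exact ⟨h₁₂', h₁'₂'⟩
  -- dyadic points
  have dyadic : ∀ n : ℕ, ∀ k : ℕ, k ≤ 2 ^ n → S ((k : ℝ) * D / 2 ^ n) := by
    intro n
    induction n with
    | zero =>
      intro k hk
      interval_cases k
      · simpa using S0
      · simpa using SD
    | succ n ih =>
      intro k hk
      rcases Nat.even_or_odd k with ⟨j, hj⟩ | ⟨j, hj⟩
      · subst hj
        have hj2 : j ≤ 2 ^ n := by omega
        have := ih j hj2
        have heq : ((j + j : ℕ) : ℝ) * D / 2 ^ (n + 1) = (j : ℝ) * D / 2 ^ n := by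
          push_cast; ring
        rwa [heq]
      · subst hj
        have hj1 : j + 1 ≤ 2 ^ n := by
          have : 2 * j + 1 ≤ 2 * 2 ^ n := by
            calc 2 * j + 1 ≤ 2 ^ (n + 1) := hk
              _ = 2 * 2 ^ n := by ring
          omega
        have hj2 : j ≤ 2 ^ n := by omega
        have hSa := ih j hj2
        have hSb := ih (j + 1) hj1
        have hpow : (0:ℝ) < 2 ^ n := by positivity
        have ha : (j : ℝ) * D / 2 ^ n ∈ Set.Icc 0 D := by
          constructor
          · positivity
          · rw [div_le_iff₀ hpow]
            have : (j : ℝ) ≤ 2 ^ n := by exact_mod_cast hj2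
            nlinarith
        have hb : ((j + 1 : ℕ) : ℝ) * D / 2 ^ n ∈ Set.Icc 0 D := by
          constructor
          · positivity
          · rw [div_le_iff₀ hpow]
            have : ((j + 1 : ℕ) : ℝ) ≤ 2 ^ n := by exact_mod_cast hj1
            nlinarith
        have hab : (j : ℝ) * D / 2 ^ n ≤ ((j + 1 : ℕ) : ℝ) * D / 2 ^ n := by
          rw [div_le_div_iff_of_pos_right hpow]
          push_cast; nlinarith
        have := mid _ _ ha hb hab hSa hSb
        have heq : ((j : ℝ) * D / 2 ^ n + ((j + 1 : ℕ) : ℝ) * D / 2 ^ n) / 2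
            = ((2 * j + 1 : ℕ) : ℝ) * D / 2 ^ (n + 1) := by
          push_cast; ring
        rwa [heq] at this
  -- limit argument
  rcases eq_or_lt_of_le hD0 with hD0' | hDpos
  · have ht0 : t = 0 := le_antisymm (by simpa [← hD0'] using ht.2) ht.1
    subst ht0; exact S0
  · have habs : ∀ n : ℕ, |dist p₁ (γ t) - π / 2| ≤ D / 2 ^ n ∧
        |dist q₁ (γ t) - π / 2| ≤ D / 2 ^ n := by
      intro n
      have hpow : (0:ℝ) < 2 ^ n := by positivity
      set x : ℝ := t * 2 ^ n / D with hx
      have hx0 : 0 ≤ x := by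
        apply div_nonneg _ hD0
        exact mul_nonneg ht.1 (le_of_lt hpow)
      set k : ℕ := ⌊x⌋₊ with hkdef
      have hk_le : (k : ℝ) ≤ x := Nat.floor_le hx0
      have hk_lt : x < (k : ℝ) + 1 := Nat.lt_floor_add_one x
      have hk2 : k ≤ 2 ^ n := by
        have hx2 : x ≤ 2 ^ n := by
          rw [hx, div_le_iff₀ hDpos]
          nlinarith [ht.2]
        have : (k : ℝ) ≤ ((2 ^ n : ℕ) : ℝ) := by push_cast; linarith
        exact_mod_cast this
      set s : ℝ := (k : ℝ) * D / 2 ^ n with hsdef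
      have hkD : (k : ℝ) * D ≤ t * 2 ^ n := by
        rw [hx, le_div_iff₀ hDpos] at hk_le; linarith
      have hkD' : t * 2 ^ n < ((k : ℝ) + 1) * D := by
        rw [hx, div_lt_iff₀ hDpos] at hk_lt; linarith
      have hst : s ≤ t := by rw [hsdef, div_le_iff₀ hpow]; linarith
      have hts : t - s < D / 2 ^ n := by
        rw [hsdef]
        have : t < ((k : ℝ) + 1) * D / 2 ^ n := by rw [lt_div_iff₀ hpow]; linarith
        have h2 : ((k : ℝ) + 1) * D / 2 ^ n = (k : ℝ) * D / 2 ^ n + D / 2 ^ n := by ring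
        linarith [this, h2 ▸ this]
      have hsI : s ∈ Set.Icc 0 D := by
        constructor
        · rw [hsdef]; positivity
        · rw [hsdef, div_le_iff₀ hpow]
          have : (k : ℝ) ≤ 2 ^ n := by exact_mod_cast hk2
          nlinarith
      have hSs := dyadic n k hk2
      have hdts : dist (γ t) (γ s) ≤ D / 2 ^ n := by
        rw [hγ t ht s hsI, abs_of_nonneg (by linarith)]; linarith
      constructor
      · have h := abs_dist_sub_le (γ t) (γ s) p₁
        rw [dist_comm (γ t) p₁, dist_comm (γ s) p₁, hSs.1] at h
        exact h.trans hdts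
      · have h := abs_dist_sub_le (γ t) (γ s) q₁
        rw [dist_comm (γ t) q₁, dist_comm (γ s) q₁, hSs.2] at h
        exact h.trans hdts
    have hlim : ∀ x : ℝ, (∀ n : ℕ, |x| ≤ D / 2 ^ n) → x = 0 := by
      intro x hxx
      by_contra h
      have h0 : 0 < |x| := abs_pos.mpr h
      obtain ⟨n, hn⟩ := exists_pow_lt_of_lt_one (div_pos h0 hDpos)
        (by norm_num : (1/2:ℝ) < 1)
      have heq : D * (1/2:ℝ) ^ n = D / 2 ^ n := by
        rw [one_div, inv_pow]; ring
      have : D * (1/2:ℝ) ^ n < D * (|x| / D) := by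
        exact mul_lt_mul_of_pos_left hn hDpos
      rw [heq, mul_div_cancel₀ _ (ne_of_gt hDpos)] at this
      exact absurd (hxx n) (not_le.mpr this)
    have hp := hlim _ (fun n => (habs n).1)
    have hq := hlim _ (fun n => (habs n).2)
    constructor <;> linarith [sub_eq_zero.mp hp, sub_eq_zero.mp hq]
end
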